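/- For every integer p ≥ 1, let G*_p be the graph obtained from the complete graph K_5 by adding, for each edge e = uv of K_5, a path P_e from u to v consisting of p new internal vertices (the paths for distinct edges being internally disjoint). Then contracting any single edge of the original K_5 yields a planar graph. -/

import Mathlib

open SimpleGraph

/-- A bundled finite simple graph. -/
structure FinGraph where
  V : Type
  [finV : Finite V]
  G : SimpleGraph V

attribute [instance] FinGraph.finV

/-- The bundled version of a finite simple graph. -/
def FinGraph.of (V : Type) [Finite V] (G : SimpleGraph V) : FinGraph := ⟨V, G⟩

/-- `H` is (an isomorphic copy of) the graph obtained from `G` by contracting the edge `uv`: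
there is a surjection `f` identifying exactly `u` and `v`, with `H` having precisely the
images of edges of `G` as edges. -/
def IsEdgeContractionOf {V W : Type} (G : SimpleGraph V) (u v : V) (H : SimpleGraph W) : Prop :=
  G.Adj u v ∧ ∃ f : V → W, f u = f v ∧ Function.Surjective f ∧
    (∀ a b : V, a ≠ b → f a = f b → (a = u ∧ b = v) ∨ (a = v ∧ b = u)) ∧
    (∀ x y : W, H.Adj x y ↔ x ≠ y ∧ ∃ a b : V, f a = x ∧ f b = y ∧ G.Adj a b)

/-- `B` is obtained from `A` by contracting one edge. -/
def ContractionStep (A B : FinGraph) : Prop :=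
  ∃ u v : A.V, IsEdgeContractionOf A.G u v B.G

/-- `B` is obtained from `A` by at most `k` edge contractions. -/
def ContractsInAtMost (k : ℕ) (A B : FinGraph) : Prop :=
  ∃ n : ℕ, n ≤ k ∧ ∃ c : ℕ → FinGraph, c 0 = A ∧ c n = B ∧
    ∀ i, i < n → ContractionStep (c i) (c (i + 1))

/-- `B` is a contraction of `A`, i.e. `B` can be obtained (up to isomorphism) from `A`
by a sequence of edge contractions. -/
def IsContraction (A B : FinGraph) : Prop :=
  ∃ C : FinGraph, Relation.ReflTransGen ContractionStep A C ∧ Nonempty (C.G ≃g B.G)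

/-- `B` is obtained from `A` by deleting one edge. -/
def EdgeDeletionStep (A B : FinGraph) : Prop :=
  ∃ e : Sym2 A.V, e ∈ A.G.edgeSet ∧ Nonempty (B.G ≃g A.G.deleteEdges {e})

/-- `B` is obtained from `A` by deleting one vertex. -/
def VertexDeletionStep (A B : FinGraph) : Prop :=
  ∃ v : A.V, Nonempty (B.G ≃g A.G.induce {x : A.V | x ≠ v})

/-- One minor operation: an edge contraction, an edge deletion or a vertex deletion. -/
def MinorStep (A B : FinGraph) : Prop :=
  ContractionStep A B ∨ EdgeDeletionStep A B ∨ VertexDeletionStep A B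

/-- `A` contains `B` as a minor: `A` can be modified to (an isomorphic copy of) `B` by a
sequence of edge contractions, edge deletions and vertex deletions. -/
def HasMinor (A B : FinGraph) : Prop :=
  ∃ C : FinGraph, Relation.ReflTransGen MinorStep A C ∧ Nonempty (C.G ≃g B.G)

/-- The complete graph on five vertices, bundled. -/
def K5 : FinGraph := FinGraph.of (Fin 5) ⊤

/-- The complete bipartite graph `K_{3,3}`, bundled. -/
def K33 : FinGraph := FinGraph.of (Fin 3 ⊕ Fin 3) (completeBipartiteGraph (Fin 3) (Fin 3))

/-- A finite graph is planar iff (by Kuratowski's theorem) it has no `K₅` and no `K_{3,3}`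
minor. -/
def FinGraph.IsPlanar (A : FinGraph) : Prop := ¬ HasMinor A K5 ∧ ¬ HasMinor A K33

/-- `A` can be contracted to a planar graph using at most `k` edge contractions. -/
def ContractiblePlanar (k : ℕ) (A : FinGraph) : Prop :=
  ∃ B : FinGraph, ContractsInAtMost k A B ∧ B.IsPlanar

/-- `P` is an `H`-witness structure of `G`: a partition of `V(G)` into nonempty connected
pieces `P x`, one for each vertex `x` of `H`, such that distinct pieces are adjacent iff the
corresponding vertices of `H` are adjacent. -/
def IsWitnessStructure {V X : Type} (G : SimpleGraph V) (H : SimpleGraph X)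
    (P : X → Set V) : Prop :=
  (∀ x : X, (P x).Nonempty) ∧
  (∀ x y : X, x ≠ y → Disjoint (P x) (P y)) ∧
  (∀ v : V, ∃ x : X, v ∈ P x) ∧
  (∀ x : X, (G.induce (P x)).Connected) ∧
  (∀ x y : X, x ≠ y → (H.Adj x y ↔ ∃ a ∈ P x, ∃ b ∈ P y, G.Adj a b))

/-- `uv` is a witness edge: an edge of `G` whose end-vertices belong to two different
witness sets of `P`. -/
def IsWitnessEdge {V X : Type} (G : SimpleGraph V) (P : X → Set V) (u v : V) : Prop :=
  G.Adj u v ∧ ¬ ∃ x : X, u ∈ P x ∧ v ∈ P x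

/-- Index type for the ten edges of `K₅`: ordered pairs `(i, j)` with `i < j`. -/
abbrev K5Edge : Type := {q : Fin 5 × Fin 5 // q.1 < q.2}

/-- The graph `G*_p`: the complete graph `K₅` together with, for each edge `{i, j}` of `K₅`
(with `i < j`), a path from `i` to `j` with `p` new internal vertices
`(⟨(i,j),_⟩, 0), …, (⟨(i,j),_⟩, p-1)`, the paths for distinct edges being internally
disjoint. -/
def K5WithPaths (p : ℕ) : SimpleGraph (Fin 5 ⊕ K5Edge × Fin p) :=
  SimpleGraph.fromRel (fun a b =>
    match a, b with
    | Sum.inl _, Sum.inl _ => True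
    | Sum.inl i, Sum.inr (e, t) => (i = e.val.1 ∧ (t : ℕ) = 0) ∨ (i = e.val.2 ∧ (t : ℕ) = p - 1)
    | Sum.inr (e, t), Sum.inr (e', t') => e = e' ∧ (t' : ℕ) = (t : ℕ) + 1
    | _, _ => False)

/-!
Planarity is read through Kuratowski: no `K₅` and no `K₃,₃` minor. A minor model in the
contraction `G*_p / ij` pulls back to a model in `G*_p` (branch sets stay disjoint and connected)
in which `i` and `j` lie in the same branch set. Both `K₅` and `K₃,₃` have minimum degree three,
while a connected set of subdivision vertices is a segment of a single path `P_e` and so has only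
two neighbours outside it; hence every branch set contains a vertex of `K₅`. At least five branch
sets, one of them containing both `i` and `j`, cannot each get their own vertex of `K₅`.
-/

open Function

namespace SimpleGraph

variable {V W X : Type}

def PreconnectedOn (G : SimpleGraph V) (S : Set V) : Prop :=
  ∀ a ∈ S, ∀ b ∈ S, ∃ w : G.Walk a b, ∀ c ∈ w.support, c ∈ S

/-- Branch sets are not required to be nonempty: this only matters for isolated vertices. -/
structure IsMinorModel (G : SimpleGraph V) (K : SimpleGraph X) (P : X → Set V) : Prop where
  pairwise_disjoint : Pairwise (Disjoint on P)
  preconnectedOn : ∀ x, G.PreconnectedOn (P x)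
  exists_adj : ∀ x y, K.Adj x y → ∃ a ∈ P x, ∃ b ∈ P y, G.Adj a b

lemma isMinorModel_singleton (K : SimpleGraph X) : K.IsMinorModel K fun x => {x} where
  pairwise_disjoint _ _ hxy := Set.disjoint_singleton.mpr hxy
  preconnectedOn x := by
    rintro a rfl b rfl
    exact ⟨.nil, by simp⟩
  exists_adj x y hxy := ⟨x, rfl, y, rfl, hxy⟩

lemma IsMinorModel.map {G : SimpleGraph V} {G' : SimpleGraph W} {K : SimpleGraph X}
    {P : X → Set V} (hP : G.IsMinorModel K P) (φ : G →g G') (hφ : Injective φ) :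
    G'.IsMinorModel K fun x => φ '' P x where
  pairwise_disjoint x y hxy := Set.disjoint_image_of_injective hφ (hP.pairwise_disjoint hxy)
  preconnectedOn x := by
    rintro _ ⟨a, ha, rfl⟩ _ ⟨b, hb, rfl⟩
    obtain ⟨w, hw⟩ := hP.preconnectedOn x a ha b hb
    refine ⟨w.map φ, fun c hc => ?_⟩
    rw [Walk.support_map, List.mem_map] at hc
    obtain ⟨c, hc, rfl⟩ := hc
    exact ⟨c, hw c hc, rfl⟩
  exists_adj x y hxy := by
    obtain ⟨a, ha, b, hb, hab⟩ := hP.exists_adj x y hxy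
    exact ⟨φ a, ⟨a, ha, rfl⟩, φ b, ⟨b, hb, rfl⟩, φ.map_adj hab⟩

lemma exists_walk_lift {G : SimpleGraph V} {H : SimpleGraph W} {f : V → W}
    (hfib : ∀ a b, f a = f b → a = b ∨ G.Adj a b)
    (hadj : ∀ x y, H.Adj x y → ∃ a b, f a = x ∧ f b = y ∧ G.Adj a b) {x y : W}
    (w : H.Walk x y) (a b : V) (ha : f a = x) (hb : f b = y) :
    ∃ w' : G.Walk a b, ∀ c ∈ w'.support, f c ∈ w.support := by
  have fibre_walk : ∀ a b, f a = f b → ∃ w' : G.Walk a b, ∀ c ∈ w'.support, f c = f a := by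
    intro a b hab
    rcases hfib a b hab with rfl | hadj
    · exact ⟨.nil, by simp⟩
    · refine ⟨.cons hadj .nil, ?_⟩
      simp [hab]
  induction w generalizing a with
  | nil =>
    obtain ⟨w', hw'⟩ := fibre_walk a b (ha.trans hb.symm)
    exact ⟨w', fun c hc => by simp [hw' c hc, ha]⟩
  | cons hxz w ih =>
    obtain ⟨a', b', ha', rfl, hab'⟩ := hadj _ _ hxz
    obtain ⟨w₁, hw₁⟩ := fibre_walk a a' (ha.trans ha'.symm)
    obtain ⟨w₂, hw₂⟩ := ih b' rfl hb
    refine ⟨w₁.append (.cons hab' w₂), fun c hc => ?_⟩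
    simp only [Walk.mem_support_append_iff, Walk.support_cons, List.mem_cons] at hc
    rcases hc with hc | rfl | hc
    · simp [hw₁ c hc, ha]
    · simp [ha']
    · simp [hw₂ c hc]

end SimpleGraph

section MinorModels

variable {V W X : Type}

lemma IsEdgeContractionOf.exists_isMinorModel {G : SimpleGraph V} {H : SimpleGraph W} {u v : V}
    (h : IsEdgeContractionOf G u v H) {K : SimpleGraph X} {Q : X → Set W}
    (hQ : H.IsMinorModel K Q) :
    ∃ P : X → Set V, G.IsMinorModel K P ∧ ∀ x, u ∈ P x → v ∈ P x := by
  obtain ⟨huv, f, hfuv, -, hfib, hadj⟩ := h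
  have hfibre : ∀ a b, f a = f b → a = b ∨ G.Adj a b := by
    intro a b hab
    by_cases hne : a = b
    · exact .inl hne
    · rcases hfib a b hne hab with ⟨rfl, rfl⟩ | ⟨rfl, rfl⟩
      exacts [.inr huv, .inr huv.symm]
  have hadj' : ∀ x y, H.Adj x y → ∃ a b, f a = x ∧ f b = y ∧ G.Adj a b :=
    fun x y hxy => ((hadj x y).mp hxy).2
  refine ⟨fun x => f ⁻¹' Q x, ⟨fun x y hxy => ?_, fun x a ha b hb => ?_, fun x y hxy => ?_⟩,
    fun x => by simp [hfuv]⟩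
  · exact (hQ.pairwise_disjoint hxy).preimage f
  · obtain ⟨w, hw⟩ := hQ.preconnectedOn x (f a) ha (f b) hb
    obtain ⟨w', hw'⟩ := SimpleGraph.exists_walk_lift hfibre hadj' w a b rfl rfl
    exact ⟨w', fun c hc => hw _ (hw' c hc)⟩
  · obtain ⟨_, hx, _, hy, hxy⟩ := hQ.exists_adj x y hxy
    obtain ⟨a, b, rfl, rfl, hab⟩ := hadj' _ _ hxy
    exact ⟨a, hx, b, hy, hab⟩

lemma MinorStep.exists_isMinorModel {A B : FinGraph} (h : MinorStep A B) {K : SimpleGraph X}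
    {Q : X → Set B.V} (hQ : B.G.IsMinorModel K Q) : ∃ P : X → Set A.V, A.G.IsMinorModel K P := by
  rcases h with ⟨u, v, hc⟩ | ⟨e, -, ⟨φ⟩⟩ | ⟨v, ⟨φ⟩⟩
  · obtain ⟨P, hP, -⟩ := hc.exists_isMinorModel hQ
    exact ⟨P, hP⟩
  · exact ⟨_, (hQ.map φ.toHom φ.injective).map (SimpleGraph.Hom.ofLE (A.G.deleteEdges_le _))
      injective_id⟩
  · let ι := SimpleGraph.Embedding.induce (G := A.G) {x | x ≠ v}
    exact ⟨_, (hQ.map φ.toHom φ.injective).map ι.toHom ι.injective⟩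

lemma HasMinor.exists_isMinorModel {A B : FinGraph} (h : HasMinor A B) :
    ∃ P : B.V → Set A.V, A.G.IsMinorModel B.G P := by
  obtain ⟨C, hAC, ⟨φ⟩⟩ := h
  obtain ⟨Q, hQ⟩ : ∃ Q : B.V → Set C.V, C.G.IsMinorModel B.G Q :=
    ⟨_, (SimpleGraph.isMinorModel_singleton B.G).map φ.symm.toHom φ.symm.injective⟩
  induction hAC using Relation.ReflTransGen.head_induction_on with
  | refl => exact ⟨Q, hQ⟩
  | head hstep _ ih =>
    obtain ⟨P, hP⟩ := ih
    exact hstep.exists_isMinorModel hP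

end MinorModels

namespace K5WithPaths

open Sum

variable {p : ℕ} {X : Type}

@[simp]
lemma adj_inr_inr {e e' : K5Edge} {t t' : Fin p} :
    (K5WithPaths p).Adj (inr (e, t)) (inr (e', t')) ↔
      e = e' ∧ ((t' : ℕ) = t + 1 ∨ (t : ℕ) = t' + 1) := by
  simp only [K5WithPaths, SimpleGraph.fromRel_adj]
  constructor
  · rintro ⟨-, ⟨rfl, h⟩ | ⟨rfl, h⟩⟩ <;> simp [h]
  · rintro ⟨rfl, h | h⟩
    · exact ⟨by simp [Fin.ext_iff, h], .inl ⟨rfl, h⟩⟩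
    · exact ⟨by simp [Fin.ext_iff, h], .inr ⟨rfl, h⟩⟩

@[simp]
lemma adj_inr_inl {e : K5Edge} {t : Fin p} {k : Fin 5} :
    (K5WithPaths p).Adj (inr (e, t)) (inl k) ↔
      (k = e.1.1 ∧ (t : ℕ) = 0) ∨ (k = e.1.2 ∧ (t : ℕ) = p - 1) := by
  simp [K5WithPaths, SimpleGraph.fromRel_adj]

def pathVertex (e : K5Edge) (n : ℕ) : Fin 5 ⊕ K5Edge × Fin p :=
  if n = 0 then inl e.1.1 else if h : n - 1 < p then inr (e, ⟨n - 1, h⟩) else inl e.1.2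

lemma pathVertex_succ (e : K5Edge) (t : Fin p) : pathVertex e (t + 1) = inr (e, t) := by
  simp [pathVertex]

lemma eq_pathVertex_of_adj {e : K5Edge} {t : Fin p} {b : Fin 5 ⊕ K5Edge × Fin p}
    (h : (K5WithPaths p).Adj (inr (e, t)) b) : b = pathVertex e t ∨ b = pathVertex e (t + 2) := by
  have ht := t.isLt
  rcases b with k | ⟨e', t'⟩
  · rcases adj_inr_inl.mp h with ⟨rfl, ht₀⟩ | ⟨rfl, ht₀⟩
    · left
      simp [pathVertex, ht₀]
    · right
      simp [pathVertex]
      omega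
  · obtain ⟨rfl, h | h⟩ := adj_inr_inr.mp h
    · right
      have : (t : ℕ) + 1 < p := h ▸ t'.isLt
      simp [pathVertex, Fin.ext_iff, h, this]
    · left
      simp [pathVertex, h]

lemma walk_stays_on_path {e : K5Edge} {t₁ : Fin p} {b : Fin 5 ⊕ K5Edge × Fin p}
    (w : (K5WithPaths p).Walk (inr (e, t₁)) b) (hw : ∀ k, inl k ∉ w.support) :
    ∃ t₂, b = inr (e, t₂) ∧ ∀ s ∈ Set.uIcc t₁ t₂, inr (e, s) ∈ w.support := by
  generalize ha : (inr (e, t₁) : Fin 5 ⊕ K5Edge × Fin p) = a at w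
  induction w generalizing t₁ with
  | nil =>
    subst ha
    exact ⟨t₁, rfl, by simp⟩
  | @cons a x b hax w ih =>
    subst ha
    obtain ⟨⟨e', t'⟩, rfl⟩ : ∃ y, x = inr y := by
      rcases x with k | y
      · exact absurd (by simp) (hw k)
      · exact ⟨y, rfl⟩
    obtain ⟨rfl, hstep⟩ := adj_inr_inr.mp hax
    obtain ⟨t₂, rfl, hseg⟩ := ih rfl (fun k hk => hw k (by simp [hk]))
    refine ⟨t₂, rfl, fun s hs => ?_⟩
    by_cases hst : s = t₁
    · simp [hst]
    · have : s ∈ Set.uIcc t' t₂ := by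
        simp only [Set.mem_uIcc, Fin.le_iff_val_le_val, Fin.ext_iff] at hs hst ⊢
        omega
      simp [hseg s this]

lemma exists_eq_inr_of_preconnectedOn {S : Set (Fin 5 ⊕ K5Edge × Fin p)}
    (hS : (K5WithPaths p).PreconnectedOn S) (hno : ∀ k, inl k ∉ S) {e : K5Edge} {t : Fin p}
    (ht : inr (e, t) ∈ S) {b : Fin 5 ⊕ K5Edge × Fin p} (hb : b ∈ S) : ∃ t', b = inr (e, t') := by
  obtain ⟨w, hw⟩ := hS _ ht b hb
  obtain ⟨t', rfl, -⟩ := walk_stays_on_path w fun k hk => hno k (hw _ hk)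
  exact ⟨t', rfl⟩

lemma inr_mem_of_preconnectedOn {S : Set (Fin 5 ⊕ K5Edge × Fin p)}
    (hS : (K5WithPaths p).PreconnectedOn S) (hno : ∀ k, inl k ∉ S) {e : K5Edge} {t t' : Fin p}
    (ht : inr (e, t) ∈ S) (ht' : inr (e, t') ∈ S) {s : Fin p} (hs : s ∈ Set.uIcc t t') :
    inr (e, s) ∈ S := by
  obtain ⟨w, hw⟩ := hS _ ht _ ht'
  obtain ⟨_, h, hseg⟩ := walk_stays_on_path w fun k hk => hno k (hw _ hk)
  cases h
  exact hw _ (hseg s hs)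

/-- `S` is a segment of a single path `P_e`; `c₁` and `c₂` are the vertices just beyond its ends. -/
lemma exists_pair_of_preconnectedOn {S : Set (Fin 5 ⊕ K5Edge × Fin p)}
    (hS : (K5WithPaths p).PreconnectedOn S) (hno : ∀ k, inl k ∉ S) :
    ∃ c₁ c₂, ∀ a ∈ S, ∀ b ∉ S, (K5WithPaths p).Adj a b → b = c₁ ∨ b = c₂ := by
  classical
  rcases S.eq_empty_or_nonempty with rfl | ⟨a₀, ha₀⟩
  · exact ⟨inl 0, inl 0, by simp⟩
  obtain ⟨e, t₀, rfl⟩ : ∃ e t, a₀ = inr (e, t) := by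
    rcases a₀ with k | ⟨e, t⟩
    exacts [absurd ha₀ (hno k), ⟨e, t, rfl⟩]
  let T := Finset.univ.filter fun t => inr (e, t) ∈ S
  have hT : T.Nonempty := ⟨t₀, by simpa [T] using ha₀⟩
  have hmin : inr (e, T.min' hT) ∈ S := by simpa [T] using T.min'_mem hT
  have hmax : inr (e, T.max' hT) ∈ S := by simpa [T] using T.max'_mem hT
  refine ⟨pathVertex e (T.min' hT), pathVertex e (T.max' hT + 2), fun a ha b hb hab => ?_⟩
  obtain ⟨t, rfl⟩ := exists_eq_inr_of_preconnectedOn hS hno ha₀ ha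
  have htT : t ∈ T := by simpa [T] using ha
  rcases eq_pathVertex_of_adj hab with rfl | rfl
  · left
    obtain heq | hlt := (T.min'_le t htT).eq_or_lt
    · rw [← heq]
    rw [Fin.lt_def] at hlt
    obtain ⟨s, hs⟩ : ∃ s : Fin p, (s : ℕ) + 1 = t := ⟨⟨t - 1, by omega⟩, by simp; omega⟩
    have hsS := inr_mem_of_preconnectedOn hS hno hmin ha (s := s)
      (by simp only [Set.mem_uIcc, Fin.le_def]; omega)
    rw [← pathVertex_succ, hs] at hsS
    exact absurd hsS hb
  · right
    obtain heq | hlt := (T.le_max' t htT).eq_or_lt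
    · rw [heq]
    rw [Fin.lt_def] at hlt
    obtain ⟨s, hs⟩ : ∃ s : Fin p, (s : ℕ) + 1 = t + 2 := ⟨⟨t + 1, by omega⟩, rfl⟩
    have hsS := inr_mem_of_preconnectedOn hS hno ha hmax (s := s)
      (by simp only [Set.mem_uIcc, Fin.le_def]; omega)
    rw [← pathVertex_succ, hs] at hsS
    exact absurd hsS hb

lemma exists_inl_mem_of_isMinorModel {K : SimpleGraph X} {P : X → Set (Fin 5 ⊕ K5Edge × Fin p)}
    (hP : (K5WithPaths p).IsMinorModel K P) {x : X} (hx : 2 < (K.neighborSet x).ncard) :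
    ∃ k, inl k ∈ P x := by
  by_contra! hno
  obtain ⟨c₁, c₂, hc⟩ := exists_pair_of_preconnectedOn (hP.preconnectedOn x) hno
  have boundary : ∀ y ∈ K.neighborSet x, ∃ b ∈ P y, b ∈ ({c₁, c₂} : Set _) := by
    intro y hxy
    obtain ⟨a, ha, b, hb, hab⟩ := hP.exists_adj x y hxy
    have hbx : b ∉ P x := fun hbx => (hP.pairwise_disjoint hxy.ne).notMem_of_mem_left hbx hb
    exact ⟨b, hb, hc a ha b hbx hab⟩
  choose! b hbP hbc using boundary
  have hinj : Set.InjOn b (K.neighborSet x) := by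
    intro y hy z hz hyz
    by_contra hne
    exact (hP.pairwise_disjoint hne).notMem_of_mem_left (hbP y hy) (hyz ▸ hbP z hz)
  have hle := (Set.ncard_le_ncard_of_injOn b hbc hinj).trans (Set.ncard_insert_le c₁ {c₂})
  rw [Set.ncard_singleton] at hle
  omega

/-- Every branch set contains a vertex of `K₅`, so there are at most five of them, and there are
only four if two vertices of `K₅` always lie in the same branch set. -/
lemma not_isMinorModel_of_mem_imp_mem {K : SimpleGraph X}
    {P : X → Set (Fin 5 ⊕ K5Edge × Fin p)} (hP : (K5WithPaths p).IsMinorModel K P)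
    (hX : 5 ≤ Nat.card X) (hK : ∀ x, 2 < (K.neighborSet x).ncard)
    {i j : Fin 5} (hij : i ≠ j) (hPij : ∀ x, inl i ∈ P x → inl j ∈ P x) : False := by
  choose k hk using fun x => exists_inl_mem_of_isMinorModel hP (hK x)
  have hk_inj : Injective k := by
    intro x y hxy
    by_contra hne
    exact (hP.pairwise_disjoint hne).notMem_of_mem_left (hk x) (hxy ▸ hk y)
  have hk_bij := hk_inj.bijective_of_nat_card_le (by simpa using hX)
  obtain ⟨xi, hxi⟩ := hk_bij.2 i
  obtain ⟨xj, hxj⟩ := hk_bij.2 j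
  have hne : xi ≠ xj := by
    rintro rfl
    exact hij (hxi.symm.trans hxj)
  exact (hP.pairwise_disjoint hne).notMem_of_mem_left (hPij xi (hxi ▸ hk xi)) (hxj ▸ hk xj)

end K5WithPaths

lemma two_lt_ncard_neighborSet_top (x : Fin 5) :
    2 < ((⊤ : SimpleGraph (Fin 5)).neighborSet x).ncard := by
  rw [neighborSet_top, Set.ncard_compl, Set.ncard_singleton]
  simp

lemma two_lt_ncard_neighborSet_completeBipartiteGraph (x : Fin 3 ⊕ Fin 3) :
    2 < ((completeBipartiteGraph (Fin 3) (Fin 3)).neighborSet x).ncard := by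
  rw [Set.two_lt_ncard_iff]
  rcases x with x | x
  · exact ⟨.inr 0, .inr 1, .inr 2, by simp⟩
  · exact ⟨.inl 0, .inl 1, .inl 2, by simp⟩

theorem k5WithPaths_contract_original_edge_planar_general
    (p : ℕ) (i j : Fin 5)
    {X : Type} [Finite X] (H : SimpleGraph X)
    (h : IsEdgeContractionOf (K5WithPaths p) (Sum.inl i) (Sum.inl j) H) :
    (FinGraph.of X H).IsPlanar := by
  have hij : i ≠ j := fun hij => h.1.ne (congrArg Sum.inl hij)
  have no_minor : ∀ B : FinGraph, 5 ≤ Nat.card B.V → (∀ x, 2 < (B.G.neighborSet x).ncard) →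
      ¬ HasMinor (FinGraph.of X H) B := by
    intro B hB hK hminor
    obtain ⟨Q, hQ⟩ := hminor.exists_isMinorModel
    obtain ⟨P, hP, hPij⟩ := h.exists_isMinorModel hQ
    exact K5WithPaths.not_isMinorModel_of_mem_imp_mem hP hB hK hij hPij
  exact ⟨no_minor K5 (by simp [K5, FinGraph.of]) two_lt_ncard_neighborSet_top,
    no_minor K33 (by simp [K33, FinGraph.of]) two_lt_ncard_neighborSet_completeBipartiteGraph⟩

/-- For every `p ≥ 1`, contracting any single edge of the original `K₅` in
`G*_p` yields a planar graph. -/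
theorem k5WithPaths_contract_original_edge_planar
    (p : ℕ) (hp : 1 ≤ p) (i j : Fin 5) (hij : i ≠ j)
    {X : Type} [Finite X] (H : SimpleGraph X)
    (h : IsEdgeContractionOf (K5WithPaths p) (Sum.inl i) (Sum.inl j) H) :
    (FinGraph.of X H).IsPlanar :=
  k5WithPaths_contract_original_edge_planar_general p i j H h
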